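/- Let K be a relatively closed subset of an open set B ⊆ ℝⁿ, and let V : K → (lines through the origin in ℝⁿ) be continuous. Suppose that whenever sequences pᵢ, qᵢ ∈ K with pᵢ ≠ qᵢ both converge to a point p ∈ K, the secant lines through pᵢ and qᵢ converge to V(p). Then for every p ∈ K there is a neighborhood W of p and a C¹ function f : V(p) → V(p)^⊥ such that K ∩ W is contained in the graph Γ of f, and at each point q ∈ K ∩ W the line V(q) is tangent to Γ at q. -/

import Mathlib

open Filter Metric Module Set
open scoped Topology RealInnerProductSpace

noncomputable def projOp {E : Type*} [NormedAddCommGroup E] [InnerProductSpace ℝ E]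
    [FiniteDimensional ℝ E] (L : Submodule ℝ E) : E →L[ℝ] E :=
  L.subtypeL.comp (Submodule.orthogonalProjectionOnto L)

/-!
Near `p` every secant of `K` is close to the line `V p = ℝ ∙ e`, so `q ↦ ⟪e, q⟫` is bi-Lipschitz
on a compact piece `A` of `K` around `p` and parametrises it by a compact set `S ⊆ ℝ`. Writing
`V q = ℝ ∙ u q` with `⟪e, u q⟫ = 1`, the uniform convergence of secants on `A` says that the jet
`(q, u q)` satisfies Whitney's `C¹` condition over `S`. On the line the extension is explicit: on
each gap of `S` take the derivative of the cubic Hermite interpolant of the two end jets, and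
integrate. Projecting the resulting `C¹` curve through `A` onto `(V p)ᗮ` gives the graph.
-/

noncomputable section

section HermiteInterpolation

variable {F : Type*} [NormedAddCommGroup F] [NormedSpace ℝ F]

def whitneyRemainder (g m : ℝ → F) (s t : ℝ) : F := g t - g s - (t - s) • m s

def hermiteCubic (g m : ℝ → F) (a b y : ℝ) : F :=
  g a + (y - a) • m a + ((y - a) ^ 2 / (2 * (b - a))) • (m b - m a) +
    (3 * ((y - a) / (b - a)) ^ 2 - 2 * ((y - a) / (b - a)) ^ 3) •
      (g b - g a - ((b - a) / 2) • (m a + m b))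

def hermiteDeriv (g m : ℝ → F) (a b y : ℝ) : F :=
  m a + ((y - a) / (b - a)) • (m b - m a) +
    (6 * ((y - a) / (b - a)) * (1 - (y - a) / (b - a)) / (b - a)) •
      (g b - g a - ((b - a) / 2) • (m a + m b))

variable (g m : ℝ → F)

lemma smul_sub_eq_whitneyRemainder_add (s t : ℝ) :
    (t - s) • (m t - m s) = whitneyRemainder g m s t + whitneyRemainder g m t s := by
  simp only [whitneyRemainder]
  module

lemma norm_sub_le_of_whitneyRemainder {c s t : ℝ} (hc : 0 ≤ c)
    (hst : ‖whitneyRemainder g m s t‖ ≤ c * |t - s|)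
    (hts : ‖whitneyRemainder g m t s‖ ≤ c * |s - t|) : ‖m t - m s‖ ≤ 2 * c := by
  rcases eq_or_ne t s with rfl | hne
  · simpa using hc
  refine le_of_mul_le_mul_left ?_ (abs_pos.2 (sub_ne_zero.2 hne))
  calc |t - s| * ‖m t - m s‖ = ‖whitneyRemainder g m s t + whitneyRemainder g m t s‖ := by
        rw [← smul_sub_eq_whitneyRemainder_add, norm_smul, Real.norm_eq_abs]
    _ ≤ c * |t - s| + c * |s - t| := norm_add_le_of_le hst hts
    _ = |t - s| * (2 * c) := by rw [abs_sub_comm s t]; ring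

lemma hasDerivAt_hermiteCubic {a b : ℝ} (hab : a ≠ b) (y : ℝ) :
    HasDerivAt (hermiteCubic g m a b) (hermiteDeriv g m a b y) y := by
  have h : b - a ≠ 0 := sub_ne_zero.2 hab.symm
  have hτ : HasDerivAt (fun y => (y - a) / (b - a)) (1 / (b - a)) y :=
    ((hasDerivAt_id y).sub_const a).div_const _
  have h0 : HasDerivAt (fun y => (y - a) • m a) (m a) y := by
    simpa using ((hasDerivAt_id y).sub_const a).smul_const (m a)
  have h1 : HasDerivAt (fun y => (y - a) ^ 2 / (2 * (b - a))) ((y - a) / (b - a)) y := by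
    refine ((((hasDerivAt_id y).sub_const a).pow 2).div_const (2 * (b - a))).congr_deriv ?_
    field_simp
    simp
  have h2 : HasDerivAt (fun y => 3 * ((y - a) / (b - a)) ^ 2 - 2 * ((y - a) / (b - a)) ^ 3)
      (6 * ((y - a) / (b - a)) * (1 - (y - a) / (b - a)) / (b - a)) y := by
    refine (((hτ.pow 2).const_mul 3).sub ((hτ.pow 3).const_mul 2)).congr_deriv ?_
    push_cast
    field_simp
    ring
  exact ((h0.const_add (g a)).add (h1.smul_const (m b - m a))).add (h2.smul_const _)

lemma hermiteCubic_left (a b : ℝ) : hermiteCubic g m a b a = g a := by simp [hermiteCubic]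

lemma hermiteCubic_right {a b : ℝ} (hab : a ≠ b) : hermiteCubic g m a b b = g b := by
  have h : b - a ≠ 0 := sub_ne_zero.2 hab.symm
  have : (b - a) ^ 2 / (2 * (b - a)) = (b - a) / 2 := by field_simp
  simp only [hermiteCubic, div_self h, this]
  module

lemma continuous_hermiteDeriv (a b : ℝ) : Continuous (hermiteDeriv g m a b) := by
  unfold hermiteDeriv
  fun_prop

lemma integral_hermiteDeriv [CompleteSpace F] (a b : ℝ) :
    ∫ y in a..b, hermiteDeriv g m a b y = g b - g a := by
  rcases eq_or_ne a b with rfl | hab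
  · simp
  rw [intervalIntegral.integral_eq_sub_of_hasDerivAt
    (fun y _ => hasDerivAt_hermiteCubic g m hab y)
    ((continuous_hermiteDeriv g m a b).intervalIntegrable _ _), hermiteCubic_left,
    hermiteCubic_right g m hab]

lemma hermiteDeriv_self (a y : ℝ) : hermiteDeriv g m a a y = m a := by simp [hermiteDeriv]

lemma hermiteDeriv_left (a b : ℝ) : hermiteDeriv g m a b a = m a := by simp [hermiteDeriv]

lemma hermiteDeriv_comm (a b : ℝ) : hermiteDeriv g m a b = hermiteDeriv g m b a := by
  funext y
  rcases eq_or_ne a b with rfl | hab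
  · rfl
  have h : b - a ≠ 0 := sub_ne_zero.2 hab.symm
  have h' : a - b ≠ 0 := sub_ne_zero.2 hab
  have e1 : (y - b) / (a - b) = 1 - (y - a) / (b - a) := by field_simp; ring
  have e2 : 6 * (1 - (y - a) / (b - a)) * (1 - (1 - (y - a) / (b - a))) / (a - b) =
      -(6 * ((y - a) / (b - a)) * (1 - (y - a) / (b - a)) / (b - a)) := by
    field_simp; ring
  simp only [hermiteDeriv, e1, e2]
  module

lemma norm_hermiteDeriv_sub_le {a b c y : ℝ} (v : F) (hc : 0 ≤ c)
    (hab : ‖whitneyRemainder g m a b‖ ≤ c * |b - a|)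
    (hba : ‖whitneyRemainder g m b a‖ ≤ c * |a - b|) (hy : (y - a) / (b - a) ∈ Icc (0 : ℝ) 1) :
    ‖hermiteDeriv g m a b y - v‖ ≤ ‖m a - v‖ + 8 * ((y - a) / (b - a)) * c := by
  set β := (y - a) / (b - a)
  set w := g b - g a - ((b - a) / 2) • (m a + m b)
  have hw : ‖w‖ ≤ c * |b - a| := by
    have : w = (2⁻¹ : ℝ) • (whitneyRemainder g m a b - whitneyRemainder g m b a) := by
      simp only [w, whitneyRemainder]
      module
    rw [this, norm_smul, Real.norm_eq_abs, abs_of_pos (by norm_num : (0 : ℝ) < 2⁻¹)]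
    have := norm_sub_le_of_le hab hba
    rw [abs_sub_comm a b] at this
    linarith
  have hβ : 0 ≤ 6 * β * (1 - β) := by nlinarith [hy.1, hy.2]
  have hcoef : ‖(6 * β * (1 - β) / (b - a)) • w‖ ≤ 6 * β * c := by
    rcases eq_or_ne a b with rfl | hne
    · simpa using mul_nonneg (mul_nonneg (by norm_num) hy.1) hc
    rw [norm_smul, Real.norm_eq_abs, abs_div, abs_of_nonneg hβ]
    calc 6 * β * (1 - β) / |b - a| * ‖w‖ ≤ 6 * β * (1 - β) / |b - a| * (c * |b - a|) := by
          gcongr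
      _ = 6 * β * (1 - β) * c := by field_simp [abs_pos.2 (sub_ne_zero.2 hne.symm)]
      _ ≤ 6 * β * c := by nlinarith [mul_nonneg (mul_nonneg hy.1 hy.1) hc]
  have hslope : ‖β • (m b - m a)‖ ≤ β * (2 * c) := by
    rw [norm_smul, Real.norm_eq_abs, abs_of_nonneg hy.1]
    exact mul_le_mul_of_nonneg_left (norm_sub_le_of_whitneyRemainder g m hc hab hba) hy.1
  calc ‖hermiteDeriv g m a b y - v‖
      = ‖(m a - v) + β • (m b - m a) + (6 * β * (1 - β) / (b - a)) • w‖ := by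
        simp only [hermiteDeriv, β, w]
        congr 1
        abel
    _ ≤ ‖m a - v‖ + β * (2 * c) + 6 * β * c := norm_add₃_le.trans (by gcongr)
    _ = ‖m a - v‖ + 8 * β * c := by ring

end HermiteInterpolation

-- `insert (sInf S)` makes the sets nonempty, so that points left of `S` get `sInf S`
def gapLeft (S : Set ℝ) (x : ℝ) : ℝ := sSup (insert (sInf S) (S ∩ Iic x))

def gapRight (S : Set ℝ) (x : ℝ) : ℝ := sInf (insert (sSup S) (S ∩ Ici x))

section Gaps

variable {S : Set ℝ}

lemma gapLeft_mem (hS : IsCompact S) (hne : S.Nonempty) (x : ℝ) : gapLeft S x ∈ S :=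
  insert_subset (hS.sInf_mem hne) inter_subset_left
    (((hS.inter_right isClosed_Iic).insert _).sSup_mem (insert_nonempty _ _))

lemma gapRight_mem (hS : IsCompact S) (hne : S.Nonempty) (x : ℝ) : gapRight S x ∈ S :=
  insert_subset (hS.sSup_mem hne) inter_subset_left
    (((hS.inter_right isClosed_Ici).insert _).sInf_mem (insert_nonempty _ _))

lemma gapLeft_le {x : ℝ} (hx : sInf S ≤ x) : gapLeft S x ≤ x :=
  csSup_le (insert_nonempty _ _) (forall_mem_insert.2 ⟨hx, fun _ hy => hy.2⟩)

lemma le_gapRight {x : ℝ} (hx : x ≤ sSup S) : x ≤ gapRight S x :=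
  le_csInf (insert_nonempty _ _) (forall_mem_insert.2 ⟨hx, fun _ hy => hy.2⟩)

lemma le_gapLeft (hS : IsCompact S) {s x : ℝ} (hs : s ∈ S) (hsx : s ≤ x) : s ≤ gapLeft S x :=
  le_csSup ((hS.bddAbove.insert _).mono (insert_subset_insert inter_subset_left))
    (mem_insert_of_mem _ ⟨hs, hsx⟩)

lemma gapRight_le (hS : IsCompact S) {s x : ℝ} (hs : s ∈ S) (hxs : x ≤ s) : gapRight S x ≤ s :=
  csInf_le ((hS.bddBelow.insert _).mono (insert_subset_insert inter_subset_left))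
    (mem_insert_of_mem _ ⟨hs, hxs⟩)

lemma gapLeft_eq_self (hS : IsCompact S) {x : ℝ} (hx : x ∈ S) : gapLeft S x = x :=
  (gapLeft_le (csInf_le hS.bddBelow hx)).antisymm (le_gapLeft hS hx le_rfl)

lemma notMem_Ioo_gapLeft_gapRight (hS : IsCompact S) {x z : ℝ} (hz : z ∈ S) :
    z ∉ Ioo (gapLeft S x) (gapRight S x) := fun ⟨hl, hr⟩ =>
  (le_total z x).elim (fun h => (le_gapLeft hS hz h).not_gt hl)
    (fun h => (gapRight_le hS hz h).not_gt hr)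

lemma gapLeft_gapRight_of_lt_sInf (hS : IsCompact S) (hne : S.Nonempty) {x : ℝ}
    (hx : x < sInf S) : gapLeft S x = sInf S ∧ gapRight S x = sInf S := by
  have hempty : S ∩ Iic x = ∅ := eq_empty_of_forall_notMem fun z hz =>
    (csInf_le hS.bddBelow hz.1).not_gt (hz.2.trans_lt hx)
  refine ⟨by rw [gapLeft, hempty, insert_empty_eq, csSup_singleton], ?_⟩
  exact (gapRight_le hS (hS.sInf_mem hne) hx.le).antisymm
    (csInf_le hS.bddBelow (gapRight_mem hS hne x))

lemma gapLeft_gapRight_of_sSup_lt (hS : IsCompact S) (hne : S.Nonempty) {x : ℝ}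
    (hx : sSup S < x) : gapLeft S x = sSup S ∧ gapRight S x = sSup S := by
  have hempty : S ∩ Ici x = ∅ := eq_empty_of_forall_notMem fun z hz =>
    (le_csSup hS.bddAbove hz.1).not_gt (hx.trans_le hz.2)
  refine ⟨?_, by rw [gapRight, hempty, insert_empty_eq, csInf_singleton]⟩
  exact (le_csSup hS.bddAbove (gapLeft_mem hS hne x)).antisymm
    (le_gapLeft hS (hS.sSup_mem hne) hx.le)

lemma gapLeft_eq_gapRight_or_mem_Icc (hS : IsCompact S) (hne : S.Nonempty) (x : ℝ) :
    gapLeft S x = gapRight S x ∨ x ∈ Icc (gapLeft S x) (gapRight S x) := by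
  rcases lt_or_ge x (sInf S) with h | h
  · obtain ⟨hl, hr⟩ := gapLeft_gapRight_of_lt_sInf hS hne h
    exact Or.inl (hl.trans hr.symm)
  rcases lt_or_ge (sSup S) x with h' | h'
  · obtain ⟨hl, hr⟩ := gapLeft_gapRight_of_sSup_lt hS hne h'
    exact Or.inl (hl.trans hr.symm)
  exact Or.inr ⟨gapLeft_le h, le_gapRight h'⟩

lemma gapLeft_gapRight_of_mem_Ioo (hS : IsCompact S) (hne : S.Nonempty) {x z : ℝ}
    (hz : z ∈ Ioo (gapLeft S x) (gapRight S x)) :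
    gapLeft S z = gapLeft S x ∧ gapRight S z = gapRight S x := by
  have hl := gapLeft_mem hS hne x
  have hr := gapRight_mem hS hne x
  have hlz := le_gapLeft hS hl hz.1.le
  have hzr := gapRight_le hS hr hz.2.le
  have hzl := gapLeft_le ((csInf_le hS.bddBelow hl).trans hz.1.le)
  have hrz := le_gapRight (hz.2.le.trans (le_csSup hS.bddAbove hr))
  refine ⟨hlz.antisymm' (not_lt.1 fun h => ?_), hzr.antisymm (not_lt.1 fun h => ?_)⟩
  · exact notMem_Ioo_gapLeft_gapRight hS (gapLeft_mem hS hne z) ⟨h, hzl.trans_lt hz.2⟩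
  · exact notMem_Ioo_gapLeft_gapRight hS (gapRight_mem hS hne z) ⟨hz.1.trans_le hrz, h⟩

lemma eventually_gapLeft_gapRight_eq (hS : IsCompact S) (hne : S.Nonempty) {x : ℝ}
    (hx : x ∉ S) : ∀ᶠ y in 𝓝 x, gapLeft S y = gapLeft S x ∧ gapRight S y = gapRight S x := by
  rcases lt_or_ge x (sInf S) with h | h
  · filter_upwards [Iio_mem_nhds h] with y hy
    rw [(gapLeft_gapRight_of_lt_sInf hS hne h).1, (gapLeft_gapRight_of_lt_sInf hS hne h).2]
    exact gapLeft_gapRight_of_lt_sInf hS hne hy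
  rcases lt_or_ge (sSup S) x with h' | h'
  · filter_upwards [Ioi_mem_nhds h'] with y hy
    rw [(gapLeft_gapRight_of_sSup_lt hS hne h').1, (gapLeft_gapRight_of_sSup_lt hS hne h').2]
    exact gapLeft_gapRight_of_sSup_lt hS hne hy
  have hl : gapLeft S x < x :=
    (gapLeft_le h).lt_of_ne fun he => hx (he ▸ gapLeft_mem hS hne x)
  have hr : x < gapRight S x :=
    (le_gapRight h').lt_of_ne fun he => hx (he ▸ gapRight_mem hS hne x)
  filter_upwards [Ioo_mem_nhds hl hr] with y hy using gapLeft_gapRight_of_mem_Ioo hS hne hy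

end Gaps

section WhitneyExtension

variable {F : Type*} [NormedAddCommGroup F] [NormedSpace ℝ F]

-- on a bounded gap `(a, b)` of `S` this is the Hermite slope of the jets at `a` and `b`;
-- beyond `S` it is constant, since there `gapLeft S x = gapRight S x`
open Classical in
def whitneySlope (S : Set ℝ) (g m : ℝ → F) (x : ℝ) : F :=
  if x ∈ S then m x else hermiteDeriv g m (gapLeft S x) (gapRight S x) x

def whitneyPrimitive (S : Set ℝ) (g m : ℝ → F) (x : ℝ) : F :=
  g (gapLeft S x) + ∫ t in gapLeft S x..x, whitneySlope S g m t

variable {S : Set ℝ} {g m : ℝ → F}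

lemma whitneySlope_of_mem {x : ℝ} (hx : x ∈ S) : whitneySlope S g m x = m x := if_pos hx

lemma whitneySlope_of_notMem {x : ℝ} (hx : x ∉ S) :
    whitneySlope S g m x = hermiteDeriv g m (gapLeft S x) (gapRight S x) x := if_neg hx

lemma sub_div_sub_mem_Icc {a b y : ℝ} (h : a = b ∨ y ∈ uIcc a b) :
    (y - a) / (b - a) ∈ Icc (0 : ℝ) 1 := by
  rcases h with rfl | h
  · simp
  rcases le_total a b with hab | hab
  · rw [uIcc_of_le hab] at h
    exact ⟨div_nonneg (by linarith [h.1]) (by linarith),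
      div_le_one_of_le₀ (by linarith [h.2]) (by linarith)⟩
  · rw [uIcc_of_ge hab] at h
    rw [← neg_div_neg_eq, neg_sub, neg_sub]
    exact ⟨div_nonneg (by linarith [h.2]) (by linarith),
      div_le_one_of_le₀ (by linarith [h.1]) (by linarith)⟩

-- `a` is the end of the gap of `y` on the side of `x` (or `y` itself when `y ∈ S`)
lemma exists_whitneySlope_eq_hermiteDeriv (hS : IsCompact S) (hne : S.Nonempty) {x : ℝ}
    (hx : x ∈ S) (y : ℝ) : ∃ a ∈ S, ∃ b ∈ S, whitneySlope S g m y = hermiteDeriv g m a b y ∧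
      a ∈ uIcc x y ∧ (y - a) / (b - a) ∈ Icc (0 : ℝ) 1 := by
  by_cases hy : y ∈ S
  · exact ⟨y, hy, y, hy, by rw [whitneySlope_of_mem hy, hermiteDeriv_self], right_mem_uIcc,
      by simp⟩
  have hgap : gapLeft S y = gapRight S y ∨ y ∈ uIcc (gapLeft S y) (gapRight S y) :=
    (gapLeft_eq_gapRight_or_mem_Icc hS hne y).imp_right (Icc_subset_uIcc ·)
  have hψ := whitneySlope_of_notMem (g := g) (m := m) hy
  rcases le_total x y with hxy | hyx
  · refine ⟨_, gapLeft_mem hS hne y, _, gapRight_mem hS hne y, hψ, ?_, sub_div_sub_mem_Icc hgap⟩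
    exact mem_uIcc_of_le (le_gapLeft hS hx hxy) (gapLeft_le ((csInf_le hS.bddBelow hx).trans hxy))
  · refine ⟨_, gapRight_mem hS hne y, _, gapLeft_mem hS hne y, hψ.trans (by rw [hermiteDeriv_comm]),
      ?_, sub_div_sub_mem_Icc (hgap.imp Eq.symm (by rw [uIcc_comm]; exact id))⟩
    exact mem_uIcc_of_ge (le_gapRight (hyx.trans (le_csSup hS.bddAbove hx))) (gapRight_le hS hx hyx)

lemma continuousAt_whitneySlope_of_notMem (hS : IsCompact S) (hne : S.Nonempty) {x : ℝ}
    (hx : x ∉ S) : ContinuousAt (whitneySlope S g m) x := by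
  refine (continuous_hermiteDeriv g m (gapLeft S x) (gapRight S x)).continuousAt.congr ?_
  filter_upwards [eventually_gapLeft_gapRight_eq hS hne hx,
    hS.isClosed.isOpen_compl.mem_nhds hx] with y hgap hy
  rw [whitneySlope_of_notMem hy, hgap.1, hgap.2]

lemma continuousAt_whitneySlope_of_mem (hS : IsCompact S) (hne : S.Nonempty) {C : ℝ}
    (hC0 : 0 ≤ C) (hC : ∀ s ∈ S, ∀ t ∈ S, ‖whitneyRemainder g m s t‖ ≤ C * |t - s|)
    (hW : ∀ ε > 0, ∃ δ > 0, ∀ s ∈ S, ∀ t ∈ S, |t - s| ≤ δ →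
      ‖whitneyRemainder g m s t‖ ≤ ε * |t - s|) {x : ℝ} (hx : x ∈ S) :
    ContinuousAt (whitneySlope S g m) x := by
  rw [Metric.continuousAt_iff]
  intro ε hε
  obtain ⟨δ, hδ, hWδ⟩ := hW (ε / 20) (by positivity)
  refine ⟨min δ (ε * δ / (20 * (C + 1))), by positivity, fun {y} hy => ?_⟩
  rw [Real.dist_eq, lt_min_iff] at hy
  obtain ⟨a, ha, b, hb, hψ, hax, hβ⟩ :=
    exists_whitneySlope_eq_hermiteDeriv (g := g) (m := m) hS hne hx y
  have hya : |y - a| ≤ |y - x| := abs_sub_right_of_mem_uIcc hax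
  have hxa : |a - x| ≤ δ := (abs_sub_left_of_mem_uIcc hax).trans hy.1.le
  have hma : ‖m a - m x‖ ≤ 2 * (ε / 20) := norm_sub_le_of_whitneyRemainder g m (by positivity)
    (hWδ x hx a ha hxa) (hWδ a ha x hx (by rwa [abs_sub_comm]))
  rw [dist_eq_norm, hψ, whitneySlope_of_mem hx]
  set β := (y - a) / (b - a)
  rcases le_or_gt |b - a| δ with hsmall | hbig
  · have := norm_hermiteDeriv_sub_le g m (m x) (c := ε / 20) (by positivity) (hWδ a ha b hb hsmall)
      (hWδ b hb a ha (by rwa [abs_sub_comm])) hβ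
    nlinarith [hβ.2]
  -- across a long gap, `y` is close to `a` relative to the gap, so `β` is small
  have hβsmall : β ≤ ε / (20 * (C + 1)) := by
    calc β = |y - a| / |b - a| := by rw [← abs_div, abs_of_nonneg hβ.1]
      _ ≤ |y - x| / δ := div_le_div₀ (abs_nonneg _) hya hδ hbig.le
      _ ≤ ε / (20 * (C + 1)) := by
        rw [div_le_iff₀ hδ]
        linarith [hy.2, show ε * δ / (20 * (C + 1)) = ε / (20 * (C + 1)) * δ by ring]
  have hβC : β * C ≤ ε / 20 := by
    calc β * C ≤ ε / (20 * (C + 1)) * C := mul_le_mul_of_nonneg_right hβsmall hC0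
      _ ≤ ε / 20 := by
        rw [div_mul_eq_mul_div, div_le_div_iff₀ (by positivity) (by positivity)]
        nlinarith
  have := norm_hermiteDeriv_sub_le g m (m x) hC0 (hC a ha b hb) (hC b hb a ha) hβ
  nlinarith

lemma continuous_whitneySlope (hS : IsCompact S) (hne : S.Nonempty) {C : ℝ}
    (hC0 : 0 ≤ C) (hC : ∀ s ∈ S, ∀ t ∈ S, ‖whitneyRemainder g m s t‖ ≤ C * |t - s|)
    (hW : ∀ ε > 0, ∃ δ > 0, ∀ s ∈ S, ∀ t ∈ S, |t - s| ≤ δ →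
      ‖whitneyRemainder g m s t‖ ≤ ε * |t - s|) :
    Continuous (whitneySlope S g m) :=
  continuous_iff_continuousAt.2 fun x => by
    by_cases hx : x ∈ S
    · exact continuousAt_whitneySlope_of_mem hS hne hC0 hC hW hx
    · exact continuousAt_whitneySlope_of_notMem hS hne hx

lemma integral_whitneySlope_gapLeft_gapRight [CompleteSpace F] (hS : IsCompact S)
    (hne : S.Nonempty) (x : ℝ) :
    ∫ t in gapLeft S x..gapRight S x, whitneySlope S g m t =
      g (gapRight S x) - g (gapLeft S x) := by
  rcases gapLeft_eq_gapRight_or_mem_Icc hS hne x with h | h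
  · simp [h]
  rw [← integral_hermiteDeriv g m]
  refine intervalIntegral.integral_congr fun t ht => ?_
  rw [uIcc_of_le (h.1.trans h.2)] at ht
  rcases ht.1.eq_or_lt with rfl | hlt
  · rw [whitneySlope_of_mem (gapLeft_mem hS hne x), hermiteDeriv_left]
  rcases ht.2.eq_or_lt with rfl | htr
  · rw [whitneySlope_of_mem (gapRight_mem hS hne x), hermiteDeriv_comm, hermiteDeriv_left]
  obtain ⟨hl, hr⟩ := gapLeft_gapRight_of_mem_Ioo hS hne ⟨hlt, htr⟩
  rw [whitneySlope_of_notMem fun ht => notMem_Ioo_gapLeft_gapRight hS ht ⟨hlt, htr⟩, hl, hr]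

lemma whitneyPrimitive_of_mem (hS : IsCompact S) {x : ℝ} (hx : x ∈ S) :
    whitneyPrimitive S g m x = g x := by
  simp [whitneyPrimitive, gapLeft_eq_self hS hx]

lemma whitneyPrimitive_eq_gapRight [CompleteSpace F] (hS : IsCompact S) (hne : S.Nonempty)
    (hψ : Continuous (whitneySlope S g m)) (x : ℝ) :
    whitneyPrimitive S g m x = g (gapRight S x) + ∫ t in gapRight S x..x, whitneySlope S g m t := by
  rw [whitneyPrimitive, ← intervalIntegral.integral_add_adjacent_intervals
    (hψ.intervalIntegrable _ (gapRight S x)) (hψ.intervalIntegrable _ x),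
    integral_whitneySlope_gapLeft_gapRight hS hne]
  abel

lemma exists_mem_uIcc_whitneyPrimitive_eq [CompleteSpace F] (hS : IsCompact S)
    (hne : S.Nonempty) (hψ : Continuous (whitneySlope S g m)) {x : ℝ} (hx : x ∈ S) (y : ℝ) :
    ∃ s ∈ S, s ∈ uIcc x y ∧ whitneyPrimitive S g m y = g s + ∫ t in s..y, whitneySlope S g m t := by
  rcases le_total x y with hxy | hyx
  · exact ⟨_, gapLeft_mem hS hne y, mem_uIcc_of_le (le_gapLeft hS hx hxy)
      (gapLeft_le ((csInf_le hS.bddBelow hx).trans hxy)), rfl⟩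
  · exact ⟨_, gapRight_mem hS hne y, mem_uIcc_of_ge
      (le_gapRight (hyx.trans (le_csSup hS.bddAbove hx))) (gapRight_le hS hx hyx),
      whitneyPrimitive_eq_gapRight hS hne hψ y⟩

lemma hasDerivAt_whitneyPrimitive_of_mem [CompleteSpace F] (hS : IsCompact S) (hne : S.Nonempty)
    (hψ : Continuous (whitneySlope S g m))
    (hW : ∀ ε > 0, ∃ δ > 0, ∀ s ∈ S, ∀ t ∈ S, |t - s| ≤ δ →
      ‖whitneyRemainder g m s t‖ ≤ ε * |t - s|) {x : ℝ} (hx : x ∈ S) :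
    HasDerivAt (whitneyPrimitive S g m) (m x) x := by
  rw [hasDerivAt_iff_isLittleO, Asymptotics.isLittleO_iff]
  intro c hc
  obtain ⟨δ₁, hδ₁, hψx⟩ := Metric.continuousAt_iff.1 hψ.continuousAt (c / 2) (by positivity)
  obtain ⟨δ₂, hδ₂, hWδ⟩ := hW (c / 2) (by positivity)
  filter_upwards [ball_mem_nhds x (lt_min hδ₁ hδ₂)] with y hy
  rw [mem_ball, Real.dist_eq, lt_min_iff] at hy
  obtain ⟨s, hs, hsxy, hHy⟩ := exists_mem_uIcc_whitneyPrimitive_eq hS hne hψ hx y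
  have hsplit : whitneyPrimitive S g m y - whitneyPrimitive S g m x - (y - x) • m x =
      whitneyRemainder g m x s + ∫ t in s..y, (whitneySlope S g m t - m x) := by
    rw [hHy, whitneyPrimitive_of_mem hS hx, intervalIntegral.integral_sub
      (hψ.intervalIntegrable _ _) intervalIntegrable_const, intervalIntegral.integral_const,
      whitneyRemainder]
    module
  have hrem : ‖whitneyRemainder g m x s‖ ≤ c / 2 * |y - x| :=
    (hWδ x hx s hs ((abs_sub_left_of_mem_uIcc hsxy).trans hy.2.le)).trans
      (mul_le_mul_of_nonneg_left (abs_sub_left_of_mem_uIcc hsxy) (by positivity))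
  have hint : ‖∫ t in s..y, (whitneySlope S g m t - m x)‖ ≤ c / 2 * |y - x| := by
    refine (intervalIntegral.norm_integral_le_of_norm_le_const fun t ht => ?_).trans
      (mul_le_mul_of_nonneg_left (abs_sub_right_of_mem_uIcc hsxy) (by positivity))
    have htxy : t ∈ uIcc x y := uIcc_subset_uIcc hsxy right_mem_uIcc (uIoc_subset_uIcc ht)
    have := hψx (x := t) (by rw [Real.dist_eq]; exact (abs_sub_left_of_mem_uIcc htxy).trans_lt hy.1)
    rw [dist_eq_norm, whitneySlope_of_mem hx] at this
    exact this.le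
  rw [hsplit, Real.norm_eq_abs]
  linarith [norm_add_le (whitneyRemainder g m x s) (∫ t in s..y, (whitneySlope S g m t - m x))]

lemma hasDerivAt_whitneyPrimitive_of_notMem [CompleteSpace F] (hS : IsCompact S)
    (hne : S.Nonempty) (hψ : Continuous (whitneySlope S g m)) {x : ℝ} (hx : x ∉ S) :
    HasDerivAt (whitneyPrimitive S g m) (whitneySlope S g m x) x := by
  refine ((hψ.integral_hasStrictDerivAt (gapLeft S x) x).hasDerivAt.const_add
    (g (gapLeft S x))).congr_of_eventuallyEq ?_
  filter_upwards [eventually_gapLeft_gapRight_eq hS hne hx] with y hy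
  rw [whitneyPrimitive, hy.1]

theorem exists_contDiff_one_extension [CompleteSpace F] (hS : IsCompact S) (hne : S.Nonempty)
    {C : ℝ} (hC0 : 0 ≤ C) (hC : ∀ s ∈ S, ∀ t ∈ S, ‖whitneyRemainder g m s t‖ ≤ C * |t - s|)
    (hW : ∀ ε > 0, ∃ δ > 0, ∀ s ∈ S, ∀ t ∈ S, |t - s| ≤ δ →
      ‖whitneyRemainder g m s t‖ ≤ ε * |t - s|) :
    ∃ φ : ℝ → F, ContDiff ℝ 1 φ ∧ ∀ s ∈ S, φ s = g s ∧ HasDerivAt φ (m s) s := by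
  have hψ := continuous_whitneySlope hS hne hC0 hC hW
  have hderiv : ∀ x, HasDerivAt (whitneyPrimitive S g m) (whitneySlope S g m x) x := fun x => by
    by_cases hx : x ∈ S
    · rw [whitneySlope_of_mem hx]
      exact hasDerivAt_whitneyPrimitive_of_mem hS hne hψ hW hx
    · exact hasDerivAt_whitneyPrimitive_of_notMem hS hne hψ hx
  refine ⟨whitneyPrimitive S g m, contDiff_one_iff_deriv.2 ⟨fun x => (hderiv x).differentiableAt,
    by rwa [funext fun x => (hderiv x).deriv]⟩, fun s hs => ⟨whitneyPrimitive_of_mem hS hs, ?_⟩⟩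
  simpa only [whitneySlope_of_mem hs] using hderiv s

end WhitneyExtension

theorem IsCompact.uniformly_tendsto_secant {X Y : Type*} [MetricSpace X] [PseudoMetricSpace Y]
    {A : Set X} (hA : IsCompact A) {Φ : X → X → Y} {Ψ : X → Y} (hΨ : ContinuousOn Ψ A)
    (hΦ : ∀ p ∈ A, ∀ ps qs : ℕ → X, (∀ i, ps i ∈ A) → (∀ i, qs i ∈ A) → (∀ i, ps i ≠ qs i) →
      Tendsto ps atTop (𝓝 p) → Tendsto qs atTop (𝓝 p) →
      Tendsto (fun i => Φ (ps i) (qs i)) atTop (𝓝 (Ψ p))) :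
    ∀ ε > 0, ∃ δ > 0, ∀ q ∈ A, ∀ q' ∈ A, q ≠ q' → dist q q' ≤ δ → dist (Φ q q') (Ψ q') ≤ ε := by
  intro ε hε
  by_contra! hbad
  choose qs hqs qs' hqs' hne hdist hfar using fun i : ℕ => hbad (1 / (i + 1)) Nat.one_div_pos_of_nat
  obtain ⟨p, hp, σ, hσ, hlim'⟩ := hA.tendsto_subseq hqs'
  have hlim : Tendsto (qs ∘ σ) atTop (𝓝 p) := hlim'.congr_dist <| squeeze_zero
    (fun i => dist_nonneg) (fun i => by rw [dist_comm]; exact hdist (σ i))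
    (tendsto_one_div_add_atTop_nhds_zero_nat.comp hσ.tendsto_atTop)
  have hΨlim : Tendsto (Ψ ∘ qs' ∘ σ) atTop (𝓝 (Ψ p)) :=
    (hΨ p hp).tendsto.comp (tendsto_nhdsWithin_iff.2 ⟨hlim', Eventually.of_forall fun i => hqs' _⟩)
  have hdist0 := ((hΦ p hp _ _ (fun i => hqs _) (fun i => hqs' _) (fun i => hne _) hlim hlim').dist
    hΨlim)
  rw [dist_self] at hdist0
  obtain ⟨i, hi⟩ := (hdist0.eventually (gt_mem_nhds hε)).exists
  exact (hfar (σ i)).not_gt hi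

lemma norm_sub_inner_smul_le {E : Type*} [NormedAddCommGroup E] [InnerProductSpace ℝ E]
    {d e u : E} (he : ‖e‖ = 1) (heu : ⟪e, u⟫ = 1) {y : E}
    (hy : y ∈ ℝ ∙ u) : ‖d - ⟪e, d⟫ • u‖ ≤ (1 + ‖u‖) * ‖d - y‖ := by
  obtain ⟨a, rfl⟩ := Submodule.mem_span_singleton.1 hy
  have hinner : |⟪e, d - a • u⟫| ≤ ‖d - a • u‖ := by
    simpa [he] using abs_real_inner_le_norm e (d - a • u)
  calc ‖d - ⟪e, d⟫ • u‖ = ‖(d - a • u) - ⟪e, d - a • u⟫ • u‖ := by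
        rw [inner_sub_right, inner_smul_right, heu, mul_one]
        congr 1
        module
    _ ≤ ‖d - a • u‖ + |⟪e, d - a • u⟫| * ‖u‖ := by
        refine (norm_sub_le _ _).trans_eq ?_
        rw [norm_smul, Real.norm_eq_abs]
    _ ≤ (1 + ‖u‖) * ‖d - a • u‖ := by nlinarith [norm_nonneg u]

section LineFields

variable {E : Type*} [NormedAddCommGroup E] [InnerProductSpace ℝ E] [FiniteDimensional ℝ E]

lemma projOp_eq_starProjection (L : Submodule ℝ E) : projOp L = L.starProjection := rfl

lemma norm_sub_projOp_apply_le {L M : Submodule ℝ E} {x : E} (hx : x ∈ L) :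
    ‖x - projOp M x‖ ≤ ‖projOp L - projOp M‖ * ‖x‖ := by
  calc ‖x - projOp M x‖ = ‖(projOp L - projOp M) x‖ := by
        rw [sub_apply, projOp_eq_starProjection L,
          (Submodule.starProjection_eq_self_iff).2 hx]
    _ ≤ ‖projOp L - projOp M‖ * ‖x‖ := ContinuousLinearMap.le_opNorm _ _

lemma span_singleton_eq_of_finrank_eq_one {L : Submodule ℝ E} (hL : finrank ℝ L = 1) {u : E}
    (hu : u ∈ L) (hu0 : u ≠ 0) : ℝ ∙ u = L :=
  Submodule.eq_of_le_of_finrank_le ((Submodule.span_singleton_le_iff_mem _ _).2 hu)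
    (by rw [hL, finrank_span_singleton hu0])

lemma exists_norm_eq_one_eq_span_singleton {L : Submodule ℝ E} (hL : finrank ℝ L = 1) :
    ∃ e : E, ‖e‖ = 1 ∧ L = ℝ ∙ e := by
  obtain ⟨v, hv, -⟩ := finrank_eq_one_iff'.1 hL
  have hv' : (v : E) ≠ 0 := by simpa using hv
  exact ⟨‖(v : E)‖⁻¹ • (v : E), norm_smul_inv_norm hv', (span_singleton_eq_of_finrank_eq_one hL
    (L.smul_mem _ v.2) (smul_ne_zero (by simpa using hv') hv')).symm⟩

lemma norm_le_two_mul_abs_inner {d e : E} (he : ‖e‖ = 1)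
    (h : ‖projOp (ℝ ∙ d) - projOp (ℝ ∙ e)‖ ≤ 1 / 2) : ‖d‖ ≤ 2 * |⟪e, d⟫| := by
  have hd := norm_sub_projOp_apply_le (M := ℝ ∙ e) (Submodule.mem_span_singleton_self d)
  have hproj : projOp (ℝ ∙ e) d = ⟪e, d⟫ • e := Submodule.starProjection_unit_singleton ℝ he d
  have := norm_sub_norm_le d (⟪e, d⟫ • e)
  rw [hproj] at hd
  rw [norm_smul, Real.norm_eq_abs, he, mul_one] at this
  nlinarith [norm_nonneg d]

lemma exists_span_singleton_eq_inner_eq_one {L : Submodule ℝ E} (hL : finrank ℝ L = 1) {e : E}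
    (he : ‖e‖ = 1) (h : ‖projOp L - projOp (ℝ ∙ e)‖ ≤ 1 / 2) :
    ∃ u : E, L = ℝ ∙ u ∧ ⟪e, u⟫ = 1 ∧ ‖u‖ ≤ 2 := by
  set c := ⟪e, projOp L e⟫
  have hc : 1 / 2 ≤ c := by
    have hclose := norm_sub_projOp_apply_le (M := L) (Submodule.mem_span_singleton_self e)
    rw [he, mul_one, norm_sub_rev (projOp (ℝ ∙ e))] at hclose
    have := real_inner_le_norm e (e - projOp L e)
    rw [inner_sub_right, real_inner_self_eq_norm_sq, he] at this
    linarith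
  have hc0 : c ≠ 0 := by positivity
  have hPe : projOp L e ≠ 0 := fun h0 => hc0 (by simp [c, h0])
  refine ⟨c⁻¹ • projOp L e, (span_singleton_eq_of_finrank_eq_one hL
    (L.smul_mem _ (L.starProjection_apply_mem e)) (smul_ne_zero (inv_ne_zero hc0) hPe)).symm,
    by rw [inner_smul_right, inv_mul_cancel₀ hc0], ?_⟩
  have hPe_le : ‖projOp L e‖ ≤ 1 := he ▸ L.norm_starProjection_apply_le e
  rw [norm_smul, Real.norm_eq_abs, abs_inv, abs_of_pos (by positivity)]
  calc c⁻¹ * ‖projOp L e‖ ≤ 2 * 1 := by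
        gcongr
        rw [inv_le_comm₀ (by positivity) two_pos]
        linarith
    _ = 2 := mul_one 2

end LineFields

theorem IsCompact.exists_contDiff_curve {E : Type*} [NormedAddCommGroup E] [NormedSpace ℝ E]
    [CompleteSpace E] {A : Set E} (hA : IsCompact A) (hne : A.Nonempty) (ℓ : E →L[ℝ] ℝ)
    (hinj : InjOn ℓ A) {u : E → E} {C : ℝ} (hC0 : 0 ≤ C)
    (hC : ∀ q ∈ A, ∀ q' ∈ A, ‖q' - q - (ℓ q' - ℓ q) • u q‖ ≤ C * |ℓ q' - ℓ q|)
    (hW : ∀ ε > 0, ∃ δ > 0, ∀ q ∈ A, ∀ q' ∈ A, |ℓ q' - ℓ q| ≤ δ →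
      ‖q' - q - (ℓ q' - ℓ q) • u q‖ ≤ ε * |ℓ q' - ℓ q|) :
    ∃ Φ : ℝ → E, ContDiff ℝ 1 Φ ∧ ∀ q ∈ A, Φ (ℓ q) = q ∧ HasDerivAt Φ (u q) (ℓ q) := by
  set Q := Function.invFunOn ℓ A
  have hQ : ∀ q ∈ A, Q (ℓ q) = q := fun q hq => hinj.leftInvOn_invFunOn hq
  have hrem : ∀ q ∈ A, ∀ q' ∈ A, whitneyRemainder Q (u ∘ Q) (ℓ q) (ℓ q') =
      q' - q - (ℓ q' - ℓ q) • u q := fun q hq q' hq' => by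
    simp only [whitneyRemainder, Function.comp, hQ q hq, hQ q' hq']
  obtain ⟨Φ, hΦ, hΦS⟩ := exists_contDiff_one_extension (g := Q) (m := u ∘ Q)
    (hA.image ℓ.continuous) (hne.image ℓ) hC0
    (by
      rintro _ ⟨q, hq, rfl⟩ _ ⟨q', hq', rfl⟩
      rw [hrem q hq q' hq']
      exact hC q hq q' hq')
    (fun ε hε => by
      obtain ⟨δ, hδ, hWδ⟩ := hW ε hε
      refine ⟨δ, hδ, ?_⟩
      rintro _ ⟨q, hq, rfl⟩ _ ⟨q', hq', rfl⟩ hqq'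
      rw [hrem q hq q' hq']
      exact hWδ q hq q' hq' hqq')
  refine ⟨Φ, hΦ, fun q hq => ?_⟩
  obtain ⟨hval, hderiv⟩ := hΦS (ℓ q) (mem_image_of_mem ℓ hq)
  rw [Function.comp_apply, hQ q hq] at hderiv
  exact ⟨hval.trans (hQ q hq), hderiv⟩

lemma exists_contDiff_graph_of_curve {E : Type*} [NormedAddCommGroup E] [InnerProductSpace ℝ E]
    {M : Submodule ℝ E} {e : E} (he : ‖e‖ = 1) (hM : M = ℝ ∙ e)
    {Φ : ℝ → E} (hΦ : ContDiff ℝ 1 Φ) :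
    ∃ f : M → Mᗮ, ContDiff ℝ 1 f ∧ ∀ s : ℝ, ⟪e, Φ s⟫ = s → ∀ u : E, HasDerivAt Φ u s →
      ⟪e, u⟫ = 1 → ∃ v : M, Φ s = v + f v ∧ ∃ w : M, w ≠ 0 ∧ (w : E) + fderiv ℝ f v w = u := by
  subst hM
  set ℓ : (ℝ ∙ e) →L[ℝ] ℝ := (innerSL ℝ e).comp (ℝ ∙ e).subtypeL
  set P := (ℝ ∙ e)ᗮ.orthogonalProjectionOnto
  have hP : ∀ x : E, (P x : E) = x - ⟪e, x⟫ • e := fun x => by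
    rw [← Submodule.starProjection_apply, Submodule.starProjection_orthogonal_val,
      Submodule.starProjection_unit_singleton ℝ he]
  have he_mem : e ∈ ℝ ∙ e := Submodule.mem_span_singleton_self e
  have he0 : e ≠ 0 := norm_ne_zero_iff.1 (by rw [he]; exact one_ne_zero)
  refine ⟨fun w => P (Φ (ℓ w)), P.contDiff.comp (hΦ.comp ℓ.contDiff), fun s hs u hu heu => ?_⟩
  have hv : ℓ ⟨s • e, Submodule.smul_mem _ s he_mem⟩ = s := by simp [ℓ, he]
  refine ⟨⟨s • e, Submodule.smul_mem _ s he_mem⟩, ?_, ⟨e, he_mem⟩, by simpa using he0, ?_⟩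
  · simp only [hv, hP, hs]
    abel
  · have hf := P.hasFDerivAt.comp _ ((hv ▸ hu.hasFDerivAt).comp _ ℓ.hasFDerivAt)
    rw [show (fun w => P (Φ (ℓ w))) = P ∘ Φ ∘ ℓ from rfl, hf.fderiv]
    simp [ℓ, hP, heu, he]

section SecantLines

variable {E : Type*} [NormedAddCommGroup E] [InnerProductSpace ℝ E] [FiniteDimensional ℝ E]

lemma norm_sub_inner_smul_le_of_span_eq {L : Submodule ℝ E} {d e u : E} (he : ‖e‖ = 1)
    (hL : L = ℝ ∙ u) (heu : ⟪e, u⟫ = 1) (hu : ‖u‖ ≤ 2) :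
    ‖d - ⟪e, d⟫ • u‖ ≤ 3 * ‖projOp (ℝ ∙ d) - projOp L‖ * ‖d‖ := by
  calc ‖d - ⟪e, d⟫ • u‖ ≤ (1 + ‖u‖) * ‖d - projOp L d‖ :=
        norm_sub_inner_smul_le he heu (hL ▸ L.starProjection_apply_mem d)
    _ ≤ 3 * (‖projOp (ℝ ∙ d) - projOp L‖ * ‖d‖) := by
        gcongr
        · linarith
        · exact norm_sub_projOp_apply_le (Submodule.mem_span_singleton_self d)
    _ = _ := by ring

lemma exists_pos_projOp_sub_le {A : Set E} {V : E → Submodule ℝ E}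
    (hVcont : ContinuousOn (fun q => projOp (V q)) A)
    (hunif : ∀ ε > 0, ∃ δ > 0, ∀ q ∈ A, ∀ q' ∈ A, q ≠ q' → dist q q' ≤ δ →
      dist (projOp (ℝ ∙ (q - q'))) (projOp (V q')) ≤ ε) {p : E} (hp : p ∈ A) :
    ∃ r > 0, ∀ q ∈ A ∩ closedBall p r, ‖projOp (V q) - projOp (V p)‖ ≤ 1 / 2 ∧
      ∀ q' ∈ A ∩ closedBall p r, q' ≠ q → ‖projOp (ℝ ∙ (q' - q)) - projOp (V p)‖ ≤ 1 / 2 := by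
  obtain ⟨δ₁, hδ₁, hsec⟩ := hunif (1 / 4) (by norm_num)
  obtain ⟨δ₂, hδ₂, hV⟩ := Metric.continuousOn_iff.1 hVcont p hp (1 / 4) (by norm_num)
  refine ⟨min (δ₁ / 2) (δ₂ / 2), by positivity, fun q hq => ?_⟩
  have hclose : ∀ q ∈ A ∩ closedBall p (min (δ₁ / 2) (δ₂ / 2)),
      ‖projOp (V q) - projOp (V p)‖ ≤ 1 / 4 := fun q hq => by
    rw [← dist_eq_norm]
    refine (hV q hq.1 ((mem_closedBall.1 hq.2).trans_lt ?_)).le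
    linarith [min_le_right (δ₁ / 2) (δ₂ / 2)]
  refine ⟨(hclose q hq).trans (by norm_num), fun q' hq' hne => ?_⟩
  have hqq' : dist q' q ≤ δ₁ := by
    linarith [dist_triangle_right q' q p, mem_closedBall.1 hq.2, mem_closedBall.1 hq'.2,
      min_le_left (δ₁ / 2) (δ₂ / 2)]
  have := hsec q' hq'.1 q hq.1 hne hqq'
  rw [dist_eq_norm] at this
  calc ‖projOp (ℝ ∙ (q' - q)) - projOp (V p)‖
      ≤ ‖projOp (ℝ ∙ (q' - q)) - projOp (V q)‖ + ‖projOp (V q) - projOp (V p)‖ :=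
        norm_sub_le_norm_sub_add_norm_sub _ _ _
    _ ≤ 1 / 2 := by linarith [hclose q hq]

lemma IsCompact.exists_contDiff_curve_of_secant {A : Set E} (hA : IsCompact A) (hne : A.Nonempty)
    {V : E → Submodule ℝ E} {e : E} (he : ‖e‖ = 1) {u : E → E}
    (hbilip : ∀ q ∈ A, ∀ q' ∈ A, ‖q' - q‖ ≤ 2 * |⟪e, q' - q⟫|)
    (hu : ∀ q ∈ A, V q = ℝ ∙ u q ∧ ⟪e, u q⟫ = 1 ∧ ‖u q‖ ≤ 2)
    (hunif : ∀ ε > 0, ∃ δ > 0, ∀ q ∈ A, ∀ q' ∈ A, q ≠ q' → dist q q' ≤ δ →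
      dist (projOp (ℝ ∙ (q - q'))) (projOp (V q')) ≤ ε) :
    ∃ Φ : ℝ → E, ContDiff ℝ 1 Φ ∧ ∀ q ∈ A, Φ ⟪e, q⟫ = q ∧ HasDerivAt Φ (u q) ⟪e, q⟫ := by
  have hinj : InjOn (innerSL ℝ e) A := fun q hq q' hq' h => by
    have := hbilip q hq q' hq'
    rw [innerSL_apply_apply, innerSL_apply_apply] at h
    rw [inner_sub_right, h, sub_self, abs_zero, mul_zero, norm_le_zero_iff, sub_eq_zero] at this
    exact this.symm
  refine hA.exists_contDiff_curve hne (innerSL ℝ e) hinj (C := 6) (by norm_num) ?_ ?_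
  · intro q hq q' hq'
    simp only [innerSL_apply_apply, ← inner_sub_right]
    calc ‖q' - q - ⟪e, q' - q⟫ • u q‖ ≤ (1 + ‖u q‖) * ‖q' - q - 0‖ :=
          norm_sub_inner_smul_le he (hu q hq).2.1 (zero_mem _)
      _ ≤ 3 * (2 * |⟪e, q' - q⟫|) := by
          rw [sub_zero]
          gcongr
          · linarith [(hu q hq).2.2]
          · exact hbilip q hq q' hq'
      _ = 6 * |⟪e, q' - q⟫| := by ring
  · intro ε hε
    obtain ⟨δ, hδ, hsec⟩ := hunif (ε / 6) (by positivity)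
    refine ⟨δ / 2, by positivity, fun q hq q' hq' hqq' => ?_⟩
    simp only [innerSL_apply_apply, ← inner_sub_right] at hqq' ⊢
    rcases eq_or_ne q' q with rfl | hne
    · simp
    have hd := hbilip q hq q' hq'
    have hproj := hsec q' hq' q hq hne (by rw [dist_eq_norm]; linarith)
    rw [dist_eq_norm] at hproj
    calc ‖q' - q - ⟪e, q' - q⟫ • u q‖ ≤ 3 * ‖projOp (ℝ ∙ (q' - q)) - projOp (V q)‖ * ‖q' - q‖ :=
          norm_sub_inner_smul_le_of_span_eq he (hu q hq).1 (hu q hq).2.1 (hu q hq).2.2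
      _ ≤ 3 * (ε / 6) * (2 * |⟪e, q' - q⟫|) := by gcongr
      _ = ε * |⟪e, q' - q⟫| := by ring

theorem IsCompact.exists_contDiff_graph_of_secant {A : Set E} (hA : IsCompact A)
    {V : E → Submodule ℝ E} (hVline : ∀ q ∈ A, finrank ℝ (V q) = 1)
    (hVcont : ContinuousOn (fun q => projOp (V q)) A)
    (hunif : ∀ ε > 0, ∃ δ > 0, ∀ q ∈ A, ∀ q' ∈ A, q ≠ q' → dist q q' ≤ δ →
      dist (projOp (ℝ ∙ (q - q'))) (projOp (V q')) ≤ ε) {p : E} (hp : p ∈ A) :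
    ∃ W ∈ 𝓝 p, ∃ f : V p → (V p)ᗮ, ContDiff ℝ 1 f ∧ ∀ q ∈ A ∩ W, ∃ v : V p,
      q = v + f v ∧ ∃ u : V p, u ≠ 0 ∧ V q = ℝ ∙ ((u : E) + fderiv ℝ f v u) := by
  obtain ⟨e, he, hVp⟩ := exists_norm_eq_one_eq_span_singleton (hVline p hp)
  obtain ⟨r, hr, hnear⟩ := exists_pos_projOp_sub_le hVcont hunif hp
  have hbilip : ∀ q ∈ A ∩ closedBall p r, ∀ q' ∈ A ∩ closedBall p r,
      ‖q' - q‖ ≤ 2 * |⟪e, q' - q⟫| := fun q hq q' hq' => by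
    rcases eq_or_ne q' q with rfl | hne
    · simp
    exact norm_le_two_mul_abs_inner he (hVp ▸ (hnear q hq).2 q' hq' hne)
  choose! u hu using fun q hq =>
    exists_span_singleton_eq_inner_eq_one (hVline q hq.1) he (hVp ▸ (hnear q hq).1)
  obtain ⟨Φ, hΦ, hΦA⟩ := (hA.inter_right isClosed_closedBall).exists_contDiff_curve_of_secant
    ⟨p, hp, mem_closedBall_self hr.le⟩ he hbilip hu
    (fun ε hε => (hunif ε hε).imp fun δ ⟨hδ, h⟩ => ⟨hδ, fun q hq q' hq' => h q hq.1 q' hq'.1⟩)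
  obtain ⟨f, hf, hgraph⟩ := exists_contDiff_graph_of_curve he hVp hΦ
  refine ⟨ball p r, ball_mem_nhds p hr, f, hf, fun q hq => ?_⟩
  have hq : q ∈ A ∩ closedBall p r := ⟨hq.1, ball_subset_closedBall hq.2⟩
  obtain ⟨hΦq, hΦ'q⟩ := hΦA q hq
  obtain ⟨v, hv, w, hw, hfw⟩ := hgraph ⟪e, q⟫ (congrArg _ hΦq) (u q) hΦ'q (hu q hq).2.1
  exact ⟨v, hΦq ▸ hv, w, hw, hfw ▸ (hu q hq).1⟩

end SecantLines

end

/-- Whitney extension theorem, C¹ case, as used in the paper: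
a relatively closed set `K ⊆ B ⊆ ℝⁿ` with a continuous line field `V` such that secant
lines of `K` converge to `V` is locally contained in the graph of a `C¹` function from
`V p` to `(V p)ᗮ`, tangent to `V` along `K`. -/
theorem whitney_C1_extension {n : ℕ}
    (B : Set (EuclideanSpace ℝ (Fin n))) (hB : IsOpen B)
    (K : Set (EuclideanSpace ℝ (Fin n)))
    (hKB : K ⊆ B)
    (hKclosed : ∃ C : Set (EuclideanSpace ℝ (Fin n)), IsClosed C ∧ K = C ∩ B)
    (V : EuclideanSpace ℝ (Fin n) → Submodule ℝ (EuclideanSpace ℝ (Fin n)))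
    (hVline : ∀ p ∈ K, finrank ℝ (V p) = 1)
    (hVcont : ∀ p ∈ K, ∀ ε > 0, ∃ δ > 0, ∀ q ∈ K, dist q p < δ →
      ‖projOp (V q) - projOp (V p)‖ < ε)
    (hsecant : ∀ p ∈ K, ∀ ps qs : ℕ → EuclideanSpace ℝ (Fin n),
      (∀ i, ps i ∈ K) → (∀ i, qs i ∈ K) → (∀ i, ps i ≠ qs i) →
      Tendsto ps atTop (𝓝 p) → Tendsto qs atTop (𝓝 p) →
      Tendsto (fun i => ‖projOp (Submodule.span ℝ {ps i - qs i}) - projOp (V p)‖)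
        atTop (𝓝 0)) :
    ∀ p ∈ K, ∃ W ∈ 𝓝 p, ∃ f : (V p) → ((V p)ᗮ : Submodule ℝ (EuclideanSpace ℝ (Fin n))),
      ContDiff ℝ 1 f ∧
      ∀ q ∈ K ∩ W, ∃ v : V p,
        q = (v : EuclideanSpace ℝ (Fin n)) + (f v : EuclideanSpace ℝ (Fin n)) ∧
        ∃ u : V p, u ≠ 0 ∧
          V q = Submodule.span ℝ
            {((u : EuclideanSpace ℝ (Fin n)) + (fderiv ℝ f v u : EuclideanSpace ℝ (Fin n)))} := by
  intro p hp
  obtain ⟨C, hC, hK⟩ := hKclosed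
  obtain ⟨r, hr, hrB⟩ := nhds_basis_closedBall.mem_iff.1 (hB.mem_nhds (hKB hp))
  have hA : IsCompact (K ∩ closedBall p r) := by
    rw [hK, inter_assoc, inter_eq_right.2 hrB]
    exact (isCompact_closedBall p r).inter_left hC
  have hVA : ContinuousOn (fun q => projOp (V q)) (K ∩ closedBall p r) :=
    Metric.continuousOn_iff.2 fun q hq ε hε => by
      simpa only [dist_eq_norm] using (hVcont q hq.1 ε hε).imp fun δ ⟨hδ, h⟩ =>
        ⟨hδ, fun q' hq' => h q' hq'.1⟩
  obtain ⟨W, hW, f, hf, hgraph⟩ :=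
    hA.exists_contDiff_graph_of_secant (fun q hq => hVline q hq.1) hVA
    (hA.uniformly_tendsto_secant hVA fun q hq ps qs hps hqs hne hpq hqq =>
      tendsto_iff_norm_sub_tendsto_zero.2 (hsecant q hq.1 ps qs (fun i => (hps i).1)
        (fun i => (hqs i).1) hne hpq hqq)) ⟨hp, mem_closedBall_self hr.le⟩
  exact ⟨W ∩ ball p r, inter_mem hW (ball_mem_nhds p hr), f, hf,
    fun q hq => hgraph q ⟨⟨hq.1, ball_subset_closedBall hq.2.2⟩, hq.2.1⟩⟩
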